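/- Let R ⊆ {0,1}^V be an indecomposable relation in IM-conj (closed under meets and joins) that contains both the all-zeros and all-ones configurations and has arity |V| ≥ 3, with no variable pinned (for each i and c, some x ∈ R has x_i ≠ c). Write R = {x : x_i ≤ x_j for all (i,j) ∈ P} for some P ⊆ V×V whose underlying undirected graph is connected. Then R is not a delta matroid: there exists a variable i and a configuration w ∈ {0, 1} (all-zeros or all-ones) in R such that w^{{i,ℓ}} ∉ R for every ℓ ∈ V, violating the delta matroid exchange property. -/
import Mathlib


def flipS {V : Type} [DecidableEq V] (x : V → Bool) (S : Finset V) : V → Bool :=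
  fun v => if v ∈ S then !x v else x v

def DeltaMatroid {V : Type} [DecidableEq V] (R : Set (V → Bool)) : Prop :=
  ∀ x ∈ R, ∀ y ∈ R, ∀ i, x i ≠ y i → ∃ j, x j ≠ y j ∧ flipS x {i, j} ∈ R

section Aux

variable {V : Type} [DecidableEq V]

lemma not_mem0 {R : Set (V → Bool)} {P : Set (V × V)}
    (hR : R = {x | ∀ p ∈ P, x p.1 = true → x p.2 = true})
    {a b i ℓ : V} (hab : (a, b) ∈ P) (ha : a = i ∨ a = ℓ)
    (hb1 : b ≠ i) (hb2 : b ≠ ℓ) :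
    flipS (fun _ => false) {i, ℓ} ∉ R := by
  intro h
  rw [hR] at h
  have := h (a, b) hab
  have haS : a ∈ ({i, ℓ} : Finset V) := by rcases ha with h' | h' <;> simp [h']
  have hbS : b ∉ ({i, ℓ} : Finset V) := by simp [hb1, hb2]
  simp [flipS, haS, hbS] at this

lemma not_mem1 {R : Set (V → Bool)} {P : Set (V × V)}
    (hR : R = {x | ∀ p ∈ P, x p.1 = true → x p.2 = true})
    {a b i ℓ : V} (hab : (a, b) ∈ P) (hb : b = i ∨ b = ℓ)
    (ha1 : a ≠ i) (ha2 : a ≠ ℓ) :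
    flipS (fun _ => true) {i, ℓ} ∉ R := by
  intro h
  rw [hR] at h
  have := h (a, b) hab
  have hbS : b ∈ ({i, ℓ} : Finset V) := by rcases hb with h' | h' <;> simp [h']
  have haS : a ∉ ({i, ℓ} : Finset V) := by simp [ha1, ha2]
  simp [flipS, haS, hbS] at this

/-- two out-neighbors at `m` kill all flips of all-zeros -/
lemma claimA0 {R : Set (V → Bool)} {P : Set (V × V)}
    (hR : R = {x | ∀ p ∈ P, x p.1 = true → x p.2 = true})
    {m a b : V} (h1 : (m, a) ∈ P) (h2 : (m, b) ∈ P)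
    (hab : a ≠ b) (ham : a ≠ m) (hbm : b ≠ m) :
    ∀ ℓ, flipS (fun _ => false) {m, ℓ} ∉ R := by
  intro ℓ
  by_cases h : a = ℓ
  · subst h
    exact not_mem0 hR h2 (Or.inl rfl) hbm (Ne.symm hab)
  · exact not_mem0 hR h1 (Or.inl rfl) ham h

/-- two in-neighbors at `m` kill all flips of all-ones -/
lemma claimA1 {R : Set (V → Bool)} {P : Set (V × V)}
    (hR : R = {x | ∀ p ∈ P, x p.1 = true → x p.2 = true})
    {m a b : V} (h1 : (a, m) ∈ P) (h2 : (b, m) ∈ P)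
    (hab : a ≠ b) (ham : a ≠ m) (hbm : b ≠ m) :
    ∀ ℓ, flipS (fun _ => true) {m, ℓ} ∉ R := by
  intro ℓ
  by_cases h : a = ℓ
  · subst h
    exact not_mem1 hR h2 (Or.inl rfl) hbm (Ne.symm hab)
  · exact not_mem1 hR h1 (Or.inl rfl) ham h

/-- a directed path i → a → b kills all flips of all-zeros at i -/
lemma claimB0 {R : Set (V → Bool)} {P : Set (V × V)}
    (hR : R = {x | ∀ p ∈ P, x p.1 = true → x p.2 = true})
    {i a b : V} (h1 : (i, a) ∈ P) (hai : a ≠ i) (h2 : (a, b) ∈ P)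
    (hba : b ≠ a) (hbi : b ≠ i) :
    ∀ ℓ, flipS (fun _ => false) {i, ℓ} ∉ R := by
  intro ℓ
  by_cases h : a = ℓ
  · subst h
    exact not_mem0 hR h2 (Or.inr rfl) hbi hba
  · exact not_mem0 hR h1 (Or.inl rfl) hai h

lemma walk_boundary {G : SimpleGraph V} (S : Set V) :
    ∀ {a b : V} (_ : G.Walk a b), a ∉ S → b ∈ S →
      ∃ u v, u ∉ S ∧ v ∈ S ∧ G.Adj u v := by
  intro a b p
  induction p with
  | nil => intro h1 h2; exact absurd h2 h1
  | @cons x y z h q ih =>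
    intro h1 h2
    by_cases hm : y ∈ S
    · exact ⟨x, y, h1, hm, h⟩
    · exact ih hm h2

lemma exists_adj_of_reachable {G : SimpleGraph V} {x y : V} (hxy : x ≠ y)
    (h : G.Reachable x y) : ∃ n, G.Adj x n := by
  obtain ⟨p⟩ := h
  cases p with
  | nil => exact absurd rfl hxy
  | cons h _ => exact ⟨_, h⟩

end Aux

/-- An indecomposable IM-conj relation of arity ≥ 3 with no pinned variable,
given as a connected conjunction of implications, is not a delta matroid: the
exchange property fails at the all-zeros or all-ones configuration. -/
theorem imconj_arity3_not_deltaMatroid {V : Type} [Fintype V] [DecidableEq V]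
    (R : Set (V → Bool)) (P : Set (V × V))
    (hcard : 3 ≤ Fintype.card V)
    (hR : R = {x | ∀ p ∈ P, x p.1 = true → x p.2 = true})
    (hconn : (SimpleGraph.fromRel (fun i j => (i, j) ∈ P ∨ (j, i) ∈ P)).Connected)
    (hnopin : ∀ (i : V) (c : Bool), ∃ x ∈ R, x i ≠ c)
    (h0 : (fun _ => false) ∈ R) (h1 : (fun _ => true) ∈ R) :
    (∃ (i : V) (w : V → Bool),
      (w = (fun _ => false) ∨ w = (fun _ => true)) ∧ w ∈ R ∧
      ∀ ℓ : V, flipS w {i, ℓ} ∉ R) ∧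
    ¬ DeltaMatroid R := by
  -- find a vertex of degree ≥ 2
  obtain ⟨m, a, b, hab, ham, hbm, e1, e2⟩ : ∃ m a b : V, a ≠ b ∧ a ≠ m ∧ b ≠ m ∧
      ((m, a) ∈ P ∨ (a, m) ∈ P) ∧ ((m, b) ∈ P ∨ (b, m) ∈ P) := by
    have hnt : Nontrivial V := Fintype.one_lt_card_iff_nontrivial.mp (by omega)
    obtain ⟨x, y, hxy⟩ := hnt
    obtain ⟨n, hxn⟩ := exists_adj_of_reachable hxy (hconn.preconnected x y)
    obtain ⟨z, hz⟩ : ∃ z : V, ¬(z = x ∨ z = n) := by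
      by_contra hc
      push_neg at hc
      have hsub : (Finset.univ : Finset V) ⊆ {x, n} := by
        intro v _
        rcases hc v with h | h <;> simp [h]
      have hle := Finset.card_le_card hsub
      have h2 : ({x, n} : Finset V).card ≤ 2 := by
        refine le_trans (Finset.card_insert_le _ _) ?_
        simp
      rw [Finset.card_univ] at hle
      omega
    obtain ⟨p⟩ := hconn.preconnected z x
    obtain ⟨u, v, huS, hvS, huv⟩ :=
      walk_boundary (G := SimpleGraph.fromRel (fun i j => (i, j) ∈ P ∨ (j, i) ∈ P))
        {w | w = x ∨ w = n} p hz (Or.inl rfl)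
    rw [SimpleGraph.fromRel_adj] at hxn huv
    have huS' : u ≠ x ∧ u ≠ n := by
      constructor <;> intro h <;> exact huS (by simp [h])
    rcases hvS with rfl | rfl
    · -- middle x, neighbors n and u
      refine ⟨v, n, u, Ne.symm huS'.2, Ne.symm hxn.1, huS'.1, ?_, ?_⟩
      · tauto
      · tauto
    · -- middle n, neighbors x and u
      refine ⟨v, x, u, Ne.symm huS'.1, hxn.1, huS'.2, ?_, ?_⟩
      · tauto
      · tauto
  have key : ∃ (i : V) (w : V → Bool),
      (w = (fun _ => false) ∨ w = (fun _ => true)) ∧ w ∈ R ∧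
      ∀ ℓ : V, flipS w {i, ℓ} ∉ R := by
    rcases e1 with e1 | e1 <;> rcases e2 with e2 | e2
    · exact ⟨m, _, Or.inl rfl, h0, claimA0 hR e1 e2 hab ham hbm⟩
    · -- m → a, b → m : B0 at b with path b → m → a
      exact ⟨b, _, Or.inl rfl, h0, claimB0 hR e2 (Ne.symm hbm) e1 ham hab⟩
    · -- a → m, m → b : B0 at a with path a → m → b
      exact ⟨a, _, Or.inl rfl, h0, claimB0 hR e1 (Ne.symm ham) e2 hbm (Ne.symm hab)⟩
    · exact ⟨m, _, Or.inr rfl, h1, claimA1 hR e1 e2 hab ham hbm⟩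
  refine ⟨key, ?_⟩
  intro hdm
  obtain ⟨i, w, hw01, hwR, hflip⟩ := key
  rcases hw01 with rfl | rfl
  · obtain ⟨j, _, hj⟩ := hdm _ hwR _ h1 i (by simp)
    exact hflip j hj
  · obtain ⟨j, _, hj⟩ := hdm _ hwR _ h0 i (by simp)
    exact hflip j hj
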